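/- If β = λ and λ ≠ 1/2 (equivalently λ = β and λ ≠ 1−β), then the non-unital associative subalgebra of the 4×4 real matrices generated by {l_o, l_a, l_b} equals M₂, the subspace of matrices whose only possibly nonzero entries are at positions (1,1), (2,1), (2,2), (3,1), (3,2), (3,3), (4,1), (4,2), (4,3). -/

import Mathlib

/-- The matrix of left multiplication by `o` in `B'(l, β)` in the ordered basis
`(o, a, b, ab)`: `l_o = E₁₁ + l·E₂₂ + l·E₃₃`. -/
noncomputable def lMo (l β : ℝ) : Matrix (Fin 4) (Fin 4) ℝ :=
  !![1, 0, 0, 0;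
     0, l, 0, 0;
     0, 0, l, 0;
     0, 0, 0, 0]

/-- The matrix of left multiplication by `a` in `B'(l, β)`:
`l_a = l·E₂₁ + E₂₂ + ((l-β)/l)·E₂₃ + ((l+β-1)/l)·E₃₃ + E₄₃`. -/
noncomputable def lMa (l β : ℝ) : Matrix (Fin 4) (Fin 4) ℝ :=
  !![0, 0, 0, 0;
     l, 1, (l - β) / l, 0;
     0, 0, (l + β - 1) / l, 0;
     0, 0, 1, 0]

/-- The matrix of left multiplication by `b` in `B'(l, β)`:
`l_b = ((l-β)/l)·E₂₂ + l·E₃₁ + ((l+β-1)/l)·E₃₂ + E₃₃ + E₄₂`. -/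
noncomputable def lMb (l β : ℝ) : Matrix (Fin 4) (Fin 4) ℝ :=
  !![0, 0, 0, 0;
     0, (l - β) / l, 0, 0;
     l, (l + β - 1) / l, 1, 0;
     0, 1, 0, 0]

/-- `M₂`: the 4×4 real matrices whose only possibly nonzero entries are at the
(1-indexed) positions (1,1), (2,1), (2,2), (3,1), (3,2), (3,3), (4,1), (4,2), (4,3). -/
def Mset2 : Set (Matrix (Fin 4) (Fin 4) ℝ) :=
  {m | m 0 1 = 0 ∧ m 0 2 = 0 ∧ m 0 3 = 0 ∧ m 1 2 = 0 ∧ m 1 3 = 0 ∧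
       m 2 3 = 0 ∧ m 3 3 = 0}

/-!
With `β = λ` and `c = (2λ - 1)/λ`, the generators are, in matrix units `E i j` (0-indexed),
`l_o = E 0 0 + λ (E 1 1 + E 2 2)`, `l_a = λ E 1 0 + E 1 1 + c E 2 2 + E 3 2` and
`l_b = λ E 2 0 + c E 2 1 + E 2 2 + E 3 1`. Since `l_o` is a combination of two orthogonal
idempotents with distinct nonzero coefficients `1` and `λ`, both idempotents `E 0 0` and
`P = E 1 1 + E 2 2` lie in the generated algebra. Multiplying `l_a`, `l_b` by `E 0 0` and `P`
then isolates every matrix unit of `M₂`; separating `E 1 1` from `E 2 2` needs `c ≠ 1`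
(i.e. `λ ≠ 1`) and extracting `E 2 1` needs `c ≠ 0` (i.e. `λ ≠ 1/2`). Conversely `M₂` is the
algebra of lower triangular matrices with vanishing last column, which contains the
generators.
-/

section Algebra

variable {K A : Type*} [Field K] [NonUnitalRing A] [Module K A] [IsScalarTower K A A]
  [SMulCommClass K A A]

theorem NonUnitalSubalgebra.mem_of_add_smul_mem_of_orthogonal {S : NonUnitalSubalgebra K A}
    {e f : A} {c : K} (he : IsIdempotentElem e) (hf : IsIdempotentElem f) (hef : e * f = 0)
    (hfe : f * e = 0) (hc0 : c ≠ 0) (hc1 : c ≠ 1) (h : e + c • f ∈ S) : e ∈ S ∧ f ∈ S := by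
  have hsq : (e + c • f) * (e + c • f) - c • (e + c • f) = (1 - c) • e := by
    simp only [add_mul, mul_add, mul_smul_comm, smul_mul_assoc, he.eq, hf.eq, hef, hfe, smul_zero]
    module
  have he_mem : e ∈ S := by
    have := SMulMemClass.smul_mem (1 - c)⁻¹ (sub_mem (mul_mem h h) (SMulMemClass.smul_mem c h))
    rwa [hsq, smul_smul, inv_mul_cancel₀ (sub_ne_zero.mpr hc1.symm), one_smul] at this
  refine ⟨he_mem, ?_⟩
  have := SMulMemClass.smul_mem c⁻¹ (sub_mem h he_mem)
  rwa [add_sub_cancel_left, smul_smul, inv_mul_cancel₀ hc0, one_smul] at this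

end Algebra

namespace Matrix

variable {n R : Type*} [Fintype n] [DecidableEq n] [CommSemiring R]

theorem mem_of_forall_single_mem {S : NonUnitalSubalgebra R (Matrix n n R)} {m : Matrix n n R}
    (h : ∀ i j, m i j ≠ 0 → single i j 1 ∈ S) : m ∈ S := by
  rw [matrix_eq_sum_single m]
  refine sum_mem fun i _ => sum_mem fun j _ => ?_
  by_cases hij : m i j = 0
  · simp [hij]
  · simpa [smul_single] using SMulMemClass.smul_mem (m i j) (h i j hij)

variable (R) [LinearOrder n]

def lowerTriangularColZero (j : n) : NonUnitalSubalgebra R (Matrix n n R) where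
  carrier := {m | m.BlockTriangular OrderDual.toDual ∧ ∀ i, m i j = 0}
  add_mem' ha hb := ⟨ha.1.add hb.1, fun i => by simp [ha.2, hb.2]⟩
  zero_mem' := ⟨blockTriangular_zero, fun _ => rfl⟩
  mul_mem' ha hb := ⟨ha.1.mul hb.1, fun i => by simp [mul_apply, hb.2]⟩
  smul_mem' c _ ha :=
    ⟨(blockTriangularSubalgebra R R _).smul_mem ha.1 c, fun i => by simp [ha.2]⟩

theorem mem_lowerTriangularColZero {j : n} {m : Matrix n n R} :
    m ∈ lowerTriangularColZero R j ↔ m.BlockTriangular OrderDual.toDual ∧ ∀ i, m i j = 0 :=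
  Iff.rfl

end Matrix

theorem Mset2_eq : Mset2 = Matrix.lowerTriangularColZero ℝ (3 : Fin 4) := by
  ext m
  rw [SetLike.mem_coe, Matrix.mem_lowerTriangularColZero]
  constructor
  · rintro ⟨h01, h02, h03, h12, h13, h23, h33⟩
    refine ⟨fun i j hij => ?_, fun i => ?_⟩
    · fin_cases i <;> fin_cases j <;> first | assumption | exact absurd hij (by decide)
    · fin_cases i <;> assumption
  · rintro ⟨hlow, hcol⟩
    exact ⟨hlow (by decide), hlow (by decide), hlow (by decide), hlow (by decide),
      hlow (by decide), hlow (by decide), hcol 3⟩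

open Matrix

theorem lMo_eq_single (l β : ℝ) :
    lMo l β = single 0 0 1 + l • (single 1 1 1 + single 2 2 1) := by
  ext i j; fin_cases i <;> fin_cases j <;> simp [lMo]

theorem lMa_self_eq_single (l : ℝ) :
    lMa l l =
      l • single 1 0 1 + single 1 1 1 + ((2 * l - 1) / l) • single 2 2 1 + single 3 2 1 := by
  ext i j; fin_cases i <;> fin_cases j <;> simp [lMa]; ring

theorem lMb_self_eq_single (l : ℝ) :
    lMb l l =
      l • single 2 0 1 + ((2 * l - 1) / l) • single 2 1 1 + single 2 2 1 + single 3 1 1 := by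
  ext i j; fin_cases i <;> fin_cases j <;> simp [lMb]; ring

theorem single_zero_zero_and_single_add_single_mem_adjoin {l : ℝ} (hl0 : l ≠ 0) (hl1 : l ≠ 1) :
    single 0 0 1 ∈ NonUnitalAlgebra.adjoin ℝ {lMo l l, lMa l l, lMb l l} ∧
      single 1 1 1 + single 2 2 1 ∈ NonUnitalAlgebra.adjoin ℝ {lMo l l, lMa l l, lMb l l} :=
  NonUnitalSubalgebra.mem_of_add_smul_mem_of_orthogonal (by simp [IsIdempotentElem])
    (by simp [IsIdempotentElem, add_mul, mul_add]) (by simp [mul_add]) (by simp [add_mul])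
    hl0 hl1 (lMo_eq_single l l ▸ NonUnitalAlgebra.subset_adjoin ℝ (by simp))

theorem single_mem_adjoin {l : ℝ} (hl0 : l ≠ 0) (hl1 : l ≠ 1) (hl : l ≠ 1 / 2) {i j : Fin 4}
    (hij : j ≤ i) (hj : j ≠ 3) :
    single i j 1 ∈ NonUnitalAlgebra.adjoin ℝ {lMo l l, lMa l l, lMb l l} := by
  set A := NonUnitalAlgebra.adjoin ℝ {lMo l l, lMa l l, lMb l l}
  have hc : (2 * l - 1) / l ≠ 0 := div_ne_zero (by contrapose! hl; linarith) hl0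
  have hc1 : (2 * l - 1) / l - 1 ≠ 0 := by
    rw [div_sub_one hl0]; exact div_ne_zero (by contrapose! hl1; linarith) hl0
  have smul_mem_iff {c : ℝ} {x} (h : c ≠ 0) : c • x ∈ A ↔ x ∈ A :=
    Submodule.smul_mem_iff A.toSubmodule h
  have ha : lMa l l ∈ A := NonUnitalAlgebra.subset_adjoin ℝ (by simp)
  have hb : lMb l l ∈ A := NonUnitalAlgebra.subset_adjoin ℝ (by simp)
  obtain ⟨h00, hP⟩ := single_zero_zero_and_single_add_single_mem_adjoin hl0 hl1
  set P : Matrix (Fin 4) (Fin 4) ℝ := single 1 1 1 + single 2 2 1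
  have h10 : single 1 0 1 ∈ A := by
    rw [← smul_mem_iff hl0]
    convert mul_mem ha h00 using 1
    simp [lMa_self_eq_single, add_mul]
  have h20 : single 2 0 1 ∈ A := by
    rw [← smul_mem_iff hl0]
    convert mul_mem hb h00 using 1
    simp [lMb_self_eq_single, add_mul]
  have h32 : single 3 2 1 ∈ A := by
    convert sub_mem ha (mul_mem hP ha) using 1
    simp [P, lMa_self_eq_single, add_mul, mul_add]
  have h31 : single 3 1 1 ∈ A := by
    convert sub_mem hb (mul_mem hP hb) using 1
    simp [P, lMb_self_eq_single, add_mul, mul_add]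
  have h22 : single 2 2 1 ∈ A := by
    rw [← smul_mem_iff hc1]
    convert sub_mem (mul_mem (mul_mem hP ha) hP) hP using 1
    simp [P, lMa_self_eq_single, add_mul, mul_add]
    rw [eq_sub_iff_add_eq, ← single_add, sub_add_cancel]
  have h11 : single 1 1 1 ∈ A := by
    convert sub_mem hP h22 using 1
    simp [P]
  have h21 : single 2 1 1 ∈ A := by
    rw [← smul_mem_iff hc]
    convert sub_mem (mul_mem (mul_mem hP hb) hP) h22 using 1
    simp [P, lMb_self_eq_single, add_mul, mul_add]
  have h30 : single 3 0 1 ∈ A := by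
    simpa using mul_mem h32 h20
  fin_cases i <;> fin_cases j <;> simp at hij hj ⊢ <;> assumption

theorem stmt_17_general (l β : ℝ) (hl0 : 0 < l) (hl1 : l < 1)
    (hβ : β = l) (hl : l ≠ 1 / 2) :
    (NonUnitalAlgebra.adjoin ℝ
        ({lMo l β, lMa l β, lMb l β} : Set (Matrix (Fin 4) (Fin 4) ℝ)) :
      Set (Matrix (Fin 4) (Fin 4) ℝ)) = Mset2 := by
  subst β
  have hgen : {lMo l l, lMa l l, lMb l l} ⊆ Mset2 := by
    rintro x (rfl | rfl | rfl) <;> simp [Mset2, lMo, lMa, lMb]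
  rw [Mset2_eq] at hgen ⊢
  refine subset_antisymm (NonUnitalAlgebra.adjoin_le hgen) fun m hm => ?_
  refine mem_of_forall_single_mem fun i j hmij => single_mem_adjoin hl0.ne' hl1.ne hl ?_ ?_
  · exact not_lt.mp fun hlt => hmij (hm.1 hlt)
  · rintro rfl
    exact hmij (hm.2 i)

/-- If `β = l` and `l ≠ 1/2` (equivalently `l = β` and `l ≠ 1 - β`), the non-unital
associative subalgebra of the 4×4 real matrices generated by `{l_o, l_a, l_b}` equals `M₂`. -/
theorem stmt_17 (l β : ℝ) (hl0 : 0 < l) (hl1 : l < 1) (hβ0 : 0 < β) (hβ1 : β < 1)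
    (hβ : β = l) (hl : l ≠ 1 / 2) :
    (NonUnitalAlgebra.adjoin ℝ
        ({lMo l β, lMa l β, lMb l β} : Set (Matrix (Fin 4) (Fin 4) ℝ)) :
      Set (Matrix (Fin 4) (Fin 4) ℝ)) = Mset2 :=
  stmt_17_general l β hl0 hl1 hβ hl
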